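/- Let K ∈ ℝ_+^{d×d} and μ ∈ (0,∞)^d be such that KM is irreducible (M = diag(μ)) with Perron–Frobenius eigenvalue λ_1 > 1, let ρ ∈ (0,∞)^d be the strictly positive fixed point of Φ_K, and let a ∈ (0,∞)^d be the Perron–Frobenius eigenvector of KM normalized so that Σ_i a_i μ_i = 1. Suppose y_0 > 0 and v : (0, y_0) → ℝ_+^d satisfies φ(v(y)) = −y a for every y ∈ (0,y_0) and y ↦ v(y) is coordinatewise nondecreasing. Then lim_{y↓0} v(y) = t^0, where t^0 = K M ρ. -/
import Mathlib


open Matrix Filter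

/-- `A` is irreducible: for all `i j` there is `m ≥ 1` with `(A^m) i j > 0`. -/
def MatIrreducible {d : ℕ} (A : Matrix (Fin d) (Fin d) ℝ) : Prop :=
  ∀ i j, ∃ m : ℕ, 1 ≤ m ∧ 0 < (A ^ m) i j

/-- The map `Φ_K f (i) = 1 - exp (-(K M f)_i)` where `M = diag(μ)`. -/
noncomputable def PhiK {d : ℕ} (κ : Matrix (Fin d) (Fin d) ℝ) (μ : Fin d → ℝ)
    (f : Fin d → ℝ) : Fin d → ℝ :=
  fun i => 1 - Real.exp (-(∑ j, κ i j * μ j * f j))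

/-- The map `φ : ℝ₊^d → ℝ^d`, `φ_i(t) = -t_i + ∑_j κ_{i,j} μ_j (1 - e^{-t_j})`. -/
noncomputable def phiMap {d : ℕ} (κ : Matrix (Fin d) (Fin d) ℝ) (μ : Fin d → ℝ)
    (t : Fin d → ℝ) : Fin d → ℝ :=
  fun i => -t i + ∑ j, κ i j * μ j * (1 - Real.exp (-t j))

private lemma concave_step {c x : ℝ} (hc0 : 0 < c) (hc1 : c < 1) (hx : 0 < x) :
    c * (1 - Real.exp (-x)) < 1 - Real.exp (-(c * x)) := by
  have h := strictConvexOn_exp.2 (Set.mem_univ (-x)) (Set.mem_univ (0:ℝ))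
    (ne_of_lt (by linarith : -x < (0:ℝ))) hc0 (by linarith : (0:ℝ) < 1 - c) (by ring)
  simp only [smul_eq_mul, mul_zero, add_zero, Real.exp_zero, mul_one] at h
  have hrw : c * -x = -(c * x) := by ring
  rw [hrw] at h
  linarith

private lemma fixed_le {d : ℕ} (hd : 0 < d) (κ : Matrix (Fin d) (Fin d) ℝ) (μ : Fin d → ℝ)
    (hκ : ∀ i j, 0 ≤ κ i j) (hμ : ∀ j, 0 < μ j)
    {f g : Fin d → ℝ} (hf : ∀ i, 0 < f i) (hg : ∀ i, 0 < g i)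
    (hfix : PhiK κ μ f = f) (hgfix : PhiK κ μ g = g) : ∀ i, g i ≤ f i := by
  have : Nonempty (Fin d) := Fin.pos_iff_nonempty.1 hd
  have hne : (Finset.univ : Finset (Fin d)).Nonempty := Finset.univ_nonempty
  set c := Finset.univ.inf' hne (fun i => f i / g i) with hcdef
  obtain ⟨i₀, -, hi₀⟩ := Finset.exists_mem_eq_inf' hne (fun i => f i / g i)
  have hceq : c = f i₀ / g i₀ := hi₀
  have hcpos : 0 < c := by
    rw [hceq]
    exact div_pos (hf i₀) (hg i₀)
  have hfc : ∀ i, c * g i ≤ f i := by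
    intro i
    have h := Finset.inf'_le (fun i => f i / g i) (Finset.mem_univ i)
    rw [← hcdef] at h
    exact (le_div_iff₀ (hg i)).1 h
  by_cases h1 : 1 ≤ c
  · intro i
    calc g i = 1 * g i := (one_mul _).symm
      _ ≤ c * g i := mul_le_mul_of_nonneg_right h1 (hg i).le
      _ ≤ f i := hfc i
  · exfalso
    push_neg at h1
    have key : ∀ i, c * g i < f i := by
      intro i
      have h3 : (1:ℝ) - Real.exp (-(∑ j, κ i j * μ j * g j)) = g i := congrFun hgfix i
      have h2 : (1:ℝ) - Real.exp (-(∑ j, κ i j * μ j * f j)) = f i := congrFun hfix i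
      have hXg : 0 < ∑ j, κ i j * μ j * g j := by
        have he : Real.exp (-(∑ j, κ i j * μ j * g j)) < 1 := by linarith [hg i]
        have := Real.exp_lt_one_iff.1 he
        linarith
      have hmon : c * ∑ j, κ i j * μ j * g j ≤ ∑ j, κ i j * μ j * f j := by
        rw [Finset.mul_sum]
        apply Finset.sum_le_sum
        intro j _
        calc c * (κ i j * μ j * g j) = κ i j * μ j * (c * g j) := by ring
          _ ≤ κ i j * μ j * f j :=
            mul_le_mul_of_nonneg_left (hfc j) (mul_nonneg (hκ i j) (hμ j).le)
      have hcs := concave_step hcpos h1 hXg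
      have hexp : Real.exp (-(∑ j, κ i j * μ j * f j))
          ≤ Real.exp (-(c * ∑ j, κ i j * μ j * g j)) :=
        Real.exp_le_exp.2 (by linarith)
      have hgi : c * g i = c * (1 - Real.exp (-∑ j, κ i j * μ j * g j)) := by rw [h3]
      linarith
    have := key i₀
    rw [hceq, div_mul_cancel₀ _ (hg i₀).ne'] at this
    exact lt_irrefl _ this

private lemma mulVecKD {d : ℕ} (κ : Matrix (Fin d) (Fin d) ℝ) (μ x : Fin d → ℝ) (i : Fin d) :
    (κ * Matrix.diagonal μ).mulVec x i = ∑ j, κ i j * μ j * x j := by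
  rw [← Matrix.mulVec_mulVec]
  simp [Matrix.mulVec, dotProduct]
  congr 1; funext j
  rw [Finset.sum_eq_single j (fun b _ hb => by simp [Matrix.diagonal_apply_ne' μ hb]) (by simp)]
  simp [mul_assoc]

private lemma one_sub_exp_neg_ge {t : ℝ} (ht : 0 ≤ t) : t * (1 - t) ≤ 1 - Real.exp (-t) := by
  have h1 : Real.exp (-t) * (1 + t) ≤ 1 := by
    have h2 := Real.add_one_le_exp t
    have h4 : Real.exp (-t) * (t + 1) ≤ Real.exp (-t) * Real.exp t :=
      mul_le_mul_of_nonneg_left h2 (Real.exp_pos (-t)).le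
    rw [← Real.exp_add] at h4
    simp at h4
    linarith
  have h5 : 1 - t ≤ Real.exp (-t) := by linarith [Real.add_one_le_exp (-t)]
  nlinarith [mul_le_mul_of_nonneg_left h5 ht]

private lemma pow_nonneg_entries {d : ℕ} {A : Matrix (Fin d) (Fin d) ℝ}
    (hA : ∀ i j, 0 ≤ A i j) : ∀ m, ∀ i j, 0 ≤ (A ^ m) i j := by
  intro m
  induction m with
  | zero =>
    intro i j
    rw [pow_zero]
    by_cases h : i = j <;> simp [Matrix.one_apply, h]
  | succ n ih =>
    intro i j
    rw [pow_succ, Matrix.mul_apply]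
    exact Finset.sum_nonneg fun k _ => mul_nonneg (ih i k) (hA k j)

private lemma zero_propagate {d : ℕ} {A : Matrix (Fin d) (Fin d) ℝ}
    (hA : ∀ i j, 0 ≤ A i j) {f : Fin d → ℝ}
    (hcl : ∀ i j, f i = 0 → 0 < A i j → f j = 0) :
    ∀ m, ∀ i j : Fin d, f i = 0 → 0 < (A ^ m) i j → f j = 0 := by
  intro m
  induction m with
  | zero =>
    intro i j hfi hpos
    rw [pow_zero] at hpos
    have hij : i = j := by
      by_contra h
      rw [Matrix.one_apply_ne h] at hpos
      exact lt_irrefl 0 hpos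
    rwa [← hij]
  | succ n ih =>
    intro i j hfi hpos
    rw [pow_succ, Matrix.mul_apply] at hpos
    have h0 : ∑ k : Fin d, (0:ℝ) < ∑ k, (A ^ n) i k * A k j := by simpa using hpos
    obtain ⟨k, -, hk⟩ := Finset.exists_lt_of_sum_lt h0
    have h1 : 0 < (A ^ n) i k := by
      rcases mul_pos_iff.1 hk with ⟨h, -⟩ | ⟨h, -⟩
      · exact h
      · exact absurd (pow_nonneg_entries hA n i k) (not_le.2 h)
    have h2 : 0 < A k j := by
      rcases mul_pos_iff.1 hk with ⟨-, h⟩ | ⟨-, h⟩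
      · exact h
      · exact absurd (hA k j) (not_le.2 h)
    exact hcl k j (ih i k hfi h1) h2

/-- Suppose `KM` is irreducible with Perron–Frobenius eigenvalue `λ₁ > 1` and (right)
Perron–Frobenius eigenvector `a ∈ (0,∞)^d` normalized so that `∑ i, a i * μ i = 1`, and
let `ρ` be the strictly positive fixed point of `Φ_K`.  If `v : (0, y₀) → ℝ₊^d` satisfies
`φ(v(y)) = -y a` and is coordinatewise nondecreasing, then `v(y) → t⁰ = K M ρ`
as `y ↓ 0`. -/
theorem min_solution_tendsto_t0 {d : ℕ}
    (κ : Matrix (Fin d) (Fin d) ℝ) (μ : Fin d → ℝ)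
    (hκ : ∀ i j, 0 ≤ κ i j) (hμ : ∀ j, 0 < μ j)
    (hirr : MatIrreducible (κ * Matrix.diagonal μ))
    (lam₁ : ℝ) (hlam₁ : 1 < lam₁) (a : Fin d → ℝ) (ha : ∀ i, 0 < a i)
    (heig : (κ * Matrix.diagonal μ).mulVec a = lam₁ • a)
    (hnorm : ∑ i, a i * μ i = 1)
    (ρ : Fin d → ℝ) (hρpos : ∀ i, 0 < ρ i) (hρfix : PhiK κ μ ρ = ρ)
    (y₀ : ℝ) (hy₀ : 0 < y₀) (v : ℝ → Fin d → ℝ)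
    (hv0 : ∀ y ∈ Set.Ioo 0 y₀, ∀ i, 0 ≤ v y i)
    (hv : ∀ y ∈ Set.Ioo 0 y₀, phiMap κ μ (v y) = -(y • a))
    (hmono : ∀ y ∈ Set.Ioo 0 y₀, ∀ z ∈ Set.Ioo 0 y₀, y ≤ z → ∀ i, v y i ≤ v z i) :
    Tendsto v (nhdsWithin 0 (Set.Ioo 0 y₀)) (nhds ((κ * Matrix.diagonal μ).mulVec ρ)) := by
  rcases Nat.eq_zero_or_pos d with hd | hd
  · subst hd
    have hvv : v = fun _ => (κ * Matrix.diagonal μ).mulVec ρ :=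
      funext fun y => funext fun i => i.elim0
    rw [hvv]
    exact tendsto_const_nhds
  set A := κ * Matrix.diagonal μ with hA
  have hmv : ∀ (x : Fin d → ℝ) (i : Fin d), A.mulVec x i = ∑ j, κ i j * μ j * x j :=
    fun x i => mulVecKD κ μ x i
  have hIoo : (Set.Ioo (0:ℝ) y₀).Nonempty := ⟨y₀/2, by constructor <;> linarith⟩
  -- coordinate equation
  have heq : ∀ y ∈ Set.Ioo 0 y₀, ∀ i,
      v y i = y * a i + ∑ j, κ i j * μ j * (1 - Real.exp (-(v y j))) := by
    intro y hy i
    have h := congrFun (hv y hy) i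
    simp only [phiMap, Pi.neg_apply, Pi.smul_apply, smul_eq_mul] at h
    linarith
  have hterm : ∀ y ∈ Set.Ioo 0 y₀, ∀ i j : Fin d,
      0 ≤ κ i j * μ j * (1 - Real.exp (-(v y j))) := by
    intro y hy i j
    have h1 : Real.exp (-(v y j)) ≤ 1 := by
      rw [Real.exp_le_one_iff]
      linarith [hv0 y hy j]
    exact mul_nonneg (mul_nonneg (hκ i j) (hμ j).le) (by linarith)
  -- the limit L
  set L : Fin d → ℝ := fun i => sInf ((fun y => v y i) '' Set.Ioo 0 y₀) with hLdef
  have hbdd : ∀ i, BddBelow ((fun y => v y i) '' Set.Ioo 0 y₀) := by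
    intro i
    refine ⟨0, ?_⟩
    rintro x ⟨y, hy, rfl⟩
    exact hv0 y hy i
  have hL0 : ∀ i, 0 ≤ L i := by
    intro i
    apply le_csInf (hIoo.image _)
    rintro x ⟨y, hy, rfl⟩
    exact hv0 y hy i
  have htendL : Tendsto v (nhdsWithin 0 (Set.Ioo 0 y₀)) (nhds L) := by
    rw [tendsto_pi_nhds]
    intro i
    have hm : MonotoneOn (fun y => v y i) (Set.Ioo 0 y₀) :=
      fun y hy z hz hyz => hmono y hy z hz hyz i
    have ht := MonotoneOn.tendsto_nhdsWithin_Ioo_right hIoo hm (hbdd i)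
    exact ht.mono_left (nhdsWithin_mono 0 Set.Ioo_subset_Ioi_self)
  have hNB : (nhdsWithin (0:ℝ) (Set.Ioo 0 y₀)).NeBot := by
    refine mem_closure_iff_nhdsWithin_neBot.1 ?_
    rw [closure_Ioo (ne_of_lt hy₀)]
    exact ⟨le_refl 0, hy₀.le⟩
  -- phiMap L = 0
  have hphiL : phiMap κ μ L = 0 := by
    have hc : Continuous (phiMap κ μ) := by
      apply continuous_pi
      intro i
      simp only [phiMap]
      apply Continuous.add
      · exact (continuous_apply i).neg
      · apply continuous_finset_sum
        intro j _
        exact continuous_const.mul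
          (continuous_const.sub (Real.continuous_exp.comp (continuous_apply j).neg))
    have h1 : Tendsto (fun y => phiMap κ μ (v y)) (nhdsWithin 0 (Set.Ioo 0 y₀))
        (nhds (phiMap κ μ L)) := (hc.tendsto L).comp htendL
    have h2 : Tendsto (fun y : ℝ => -(y • a)) (nhdsWithin 0 (Set.Ioo 0 y₀))
        (nhds (0 : Fin d → ℝ)) := by
      have hc2 : Continuous (fun y : ℝ => -(y • a)) :=
        (continuous_id.smul continuous_const).neg
      have := (hc2.tendsto 0).mono_left (nhdsWithin_le_nhds :
        nhdsWithin (0:ℝ) (Set.Ioo 0 y₀) ≤ nhds 0)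
      simpa using this
    have h3 : Tendsto (fun y => phiMap κ μ (v y)) (nhdsWithin 0 (Set.Ioo 0 y₀))
        (nhds (0 : Fin d → ℝ)) :=
      Tendsto.congr' (eventually_nhdsWithin_of_forall fun y hy => (hv y hy).symm) h2
    exact tendsto_nhds_unique h1 h3
  have hLfix : ∀ i, L i = ∑ j, κ i j * μ j * (1 - Real.exp (-(L j))) := by
    intro i
    have h := congrFun hphiL i
    simp only [phiMap, Pi.zero_apply] at h
    linarith
  -- L is not identically zero
  have hLne : ∃ j, 0 < L j := by
    by_contra hcon
    push_neg at hcon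
    have hL00 : L = 0 := funext fun j => le_antisymm (hcon j) (hL0 j)
    set ε := (lam₁ - 1) / (2 * lam₁) with hεdef
    have hε0 : 0 < ε := div_pos (by linarith) (by linarith)
    have hε1 : ε < 1 := by
      rw [hεdef, div_lt_one (by linarith)]
      linarith
    set q := (1 - ε) * lam₁ with hqdef
    have hq1 : 1 < q := by
      have hlz : lam₁ ≠ 0 := by linarith
      have hqe : q = (lam₁ + 1) / 2 := by
        rw [hqdef, hεdef]
        field_simp
        ring
      rw [hqe]
      linarith
    have hev : ∀ᶠ y in nhdsWithin (0:ℝ) (Set.Ioo 0 y₀), ∀ j, v y j < ε := by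
      rw [eventually_all]
      intro j
      have htj : Tendsto (fun y => v y j) (nhdsWithin (0:ℝ) (Set.Ioo 0 y₀)) (nhds 0) := by
        have := tendsto_pi_nhds.1 htendL j
        rwa [hL00, Pi.zero_apply] at this
      exact htj.eventually_lt_const hε0
    obtain ⟨y, hyε, hy⟩ := (hev.and eventually_mem_nhdsWithin).exists
    have heigc : ∀ i, ∑ j, κ i j * μ j * a j = lam₁ * a i := by
      intro i
      have h := congrFun heig i
      rw [hmv a i] at h
      simpa [Pi.smul_apply, smul_eq_mul] using h
    have hstep : ∀ n : ℕ, ∀ i, y * q ^ n * a i ≤ v y i := by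
      intro n
      induction n with
      | zero =>
        intro i
        rw [pow_zero, mul_one, heq y hy i]
        have hs : 0 ≤ ∑ j, κ i j * μ j * (1 - Real.exp (-(v y j))) :=
          Finset.sum_nonneg fun j _ => hterm y hy i j
        linarith
      | succ n ih =>
        intro i
        set s := y * q ^ n with hsdef
        have hs0 : 0 < s := mul_pos hy.1 (pow_pos (by linarith) n)
        have hterm2 : ∀ j : Fin d, κ i j * μ j * ((1 - ε) * (s * a j)) ≤
            κ i j * μ j * (1 - Real.exp (-(v y j))) := by
          intro j
          apply mul_le_mul_of_nonneg_left _ (mul_nonneg (hκ i j) (hμ j).le)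
          have h1 : s * a j ≤ v y j := ih j
          have h2 : v y j ≤ ε := (hyε j).le
          have h3 : s * a j ≤ ε := le_trans h1 h2
          have h4 : 0 ≤ s * a j := (mul_pos hs0 (ha j)).le
          have e1 : Real.exp (-(v y j)) ≤ Real.exp (-(s * a j)) :=
            Real.exp_le_exp.2 (by linarith)
          have e2 := one_sub_exp_neg_ge h4
          nlinarith
        have hsum2 : ∑ j, κ i j * μ j * ((1 - ε) * (s * a j)) =
            (1 - ε) * s * (lam₁ * a i) := by
          rw [← heigc i, Finset.mul_sum]
          apply Finset.sum_congr rfl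
          intro j _
          ring
        have hsum_le : ∑ j, κ i j * μ j * ((1 - ε) * (s * a j)) ≤
            ∑ j, κ i j * μ j * (1 - Real.exp (-(v y j))) :=
          Finset.sum_le_sum fun j _ => hterm2 j
        have hvyi := heq y hy i
        have hyai : 0 ≤ y * a i := (mul_pos hy.1 (ha i)).le
        calc y * q ^ (n + 1) * a i = (1 - ε) * s * (lam₁ * a i) := by
              rw [pow_succ, hsdef, hqdef]; ring
          _ = ∑ j, κ i j * μ j * ((1 - ε) * (s * a j)) := hsum2.symm
          _ ≤ ∑ j, κ i j * μ j * (1 - Real.exp (-(v y j))) := hsum_le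
          _ ≤ v y i := by linarith
    obtain ⟨i⟩ : Nonempty (Fin d) := Fin.pos_iff_nonempty.1 hd
    obtain ⟨n, hn⟩ := pow_unbounded_of_one_lt (ε / (y * a i)) hq1
    have h1 := hstep n i
    have h2 : v y i < ε := hyε i
    have h3 : 0 < y * a i := mul_pos hy.1 (ha i)
    rw [div_lt_iff₀ h3] at hn
    nlinarith
  -- the fixed point f of PhiK
  set f : Fin d → ℝ := fun j => 1 - Real.exp (-(L j)) with hfdef
  have hf0 : ∀ j, 0 ≤ f j := by
    intro j
    have h1 : Real.exp (-(L j)) ≤ 1 := by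
      rw [Real.exp_le_one_iff]
      linarith [hL0 j]
    simp only [hfdef]
    linarith
  have hLf : ∀ i, L i = ∑ j, κ i j * μ j * f j := hLfix
  have hffix : PhiK κ μ f = f := by
    funext i
    simp only [PhiK, hfdef]
    rw [← hLf i]
  obtain ⟨j₀, hj₀⟩ := hLne
  have hfj₀ : 0 < f j₀ := by
    have : Real.exp (-(L j₀)) < 1 := by
      rw [Real.exp_lt_one_iff]
      linarith
    simp only [hfdef]
    linarith
  have hAent : ∀ i j, A i j = κ i j * μ j := by
    intro i j
    rw [hA, Matrix.mul_diagonal]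
  have hAnn : ∀ i j, 0 ≤ A i j := by
    intro i j
    rw [hAent]
    exact mul_nonneg (hκ i j) (hμ j).le
  have hclosed : ∀ i j, f i = 0 → 0 < A i j → f j = 0 := by
    intro i j hfi hpos
    have hLi : L i = 0 := by
      have h1 : Real.exp (-(L i)) = 1 := by
        have := hfi
        simp only [hfdef] at this
        linarith
      have h2 : -(L i) = 0 := (Real.exp_eq_one_iff _).1 h1
      linarith
    have hsum0 : ∑ j, κ i j * μ j * f j = 0 := by rw [← hLf i, hLi]
    have hz := (Finset.sum_eq_zero_iff_of_nonneg
      (fun j _ => mul_nonneg (mul_nonneg (hκ i j) (hμ j).le) (hf0 j))).1 hsum0 j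
      (Finset.mem_univ j)
    rw [hAent] at hpos
    by_contra hne2
    have hfj : 0 < f j := lt_of_le_of_ne (hf0 j) (Ne.symm hne2)
    nlinarith
  have hfpos : ∀ i, 0 < f i := by
    intro i
    rcases lt_or_eq_of_le (hf0 i) with h | h
    · exact h
    exfalso
    obtain ⟨m, -, hm⟩ := hirr i j₀
    have := zero_propagate hAnn hclosed m i j₀ h.symm hm
    linarith
  have hfeq : f = ρ := by
    have h1 := fixed_le hd κ μ hκ hμ hfpos hρpos hffix hρfix
    have h2 := fixed_le hd κ μ hκ hμ hρpos hfpos hρfix hffix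
    exact funext fun i => le_antisymm (h2 i) (h1 i)
  have hLeq : A.mulVec ρ = L := by
    funext i
    rw [hmv ρ i, ← hfeq, ← hLf i]
  rw [hLeq]
  exact htendL
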